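/- arXiv:1104.0568 — 4 statements merged into one kernel-verified Lean document; each statement's English description precedes it below -/
import Mathlib

section
/- Let n ≥ 1, let 𝒯 be a tree sequence of order n, let k = (k_1,...,k_n) ∈ ℤ^n and let 1 ≤ i < j ≤ n. Let k' be obtained from k by replacing k_i with k_j + j − i and k_j with k_i + i − j. Then L_n(𝒯,k) = −L_n(𝒯,k'); that is, L_n(𝒯,·) is shift-antisymmetric. -/
/-- The simple graph underlying a directed edge labeling. -/
def treeRel {n : ℕ} (e : Fin (n - 1) → Fin n × Fin n) : SimpleGraph (Fin n) :=
  SimpleGraph.fromRel (fun p q => ∃ j, e j = (p, q))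

/-- An `n`-tree: a directed tree whose `n` vertices are identified with `1, …, n`
(here `Fin n`) and whose `n - 1` edges are identified with `1', …, (n-1)'`
(here `Fin (n-1)`); `edge j = (p, q)` means the edge `j'` is directed from `p` to `q`. -/
structure NTree (n : ℕ) where
  edge : Fin (n - 1) → Fin n × Fin n
  loopless : ∀ j, (edge j).1 ≠ (edge j).2
  edgeInj : ∀ j j' : Fin (n - 1),
    (edge j = edge j' ∨ edge j = ((edge j').2, (edge j').1)) → j = j'
  conn : (treeRel edge).Connected

/-- The head of the edge `j'` with respect to the standard orientation away from
the root `r`: the endpoint farther from `r`. -/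
noncomputable def stdHead {n : ℕ} (T : NTree n) (r : Fin n) (j : Fin (n - 1)) : Fin n :=
  if (treeRel T.edge).dist r (T.edge j).1 < (treeRel T.edge).dist r (T.edge j).2
    then (T.edge j).2 else (T.edge j).1

/-- The permutation `π` of the vertices: first the root, then the standard heads of the
edges `1', 2', …, (n-1)'` in this order. -/
noncomputable def permFun {n : ℕ} (T : NTree n) (r : Fin n) : Fin n → Fin n :=
  fun m => if h : m.1 = 0 then r else stdHead T r ⟨m.1 - 1, by have := m.isLt; omega⟩

/-- The sign of an `n`-tree with respect to a root `r`:
`(-1) ^ (number of reversed edges) * sgn π`. -/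
noncomputable def treeSignAt {n : ℕ} (T : NTree n) (r : Fin n) : ℤ :=
  (-1) ^ (Finset.univ.filter
      (fun j : Fin (n - 1) => stdHead T r j ≠ (T.edge j).2)).card *
    (if h : Function.Bijective (permFun T r) then
      ((Equiv.Perm.sign (Equiv.ofBijective (permFun T r) h) : ℤˣ) : ℤ) else 1)

/-- The sign of an `n`-tree (independent of the root; we use the vertex `1`). -/
noncomputable def treeSign {n : ℕ} (T : NTree n) : ℤ :=
  if h : 0 < n then treeSignAt T ⟨0, h⟩ else 1

/-- `l` is admissible for `(T, k)`: for each edge `j' = (p, q)`,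
if `k p + p < k q + q` then `k p + p ≤ l j + j < k q + q`, and otherwise
`k q + q ≤ l j + j < k p + p` (all indices are 1-based in the paper, so a vertex
`p : Fin n` carries the label `k p + (p + 1)` and an edge `j : Fin (n-1)` the label
`l j + (j + 1)`). -/
def Admissible {n : ℕ} (T : NTree n) (k : Fin n → ℤ) (l : Fin (n - 1) → ℤ) : Prop :=
  ∀ j : Fin (n - 1),
    if k (T.edge j).1 + ((T.edge j).1.1 : ℤ) + 1 < k (T.edge j).2 + ((T.edge j).2.1 : ℤ) + 1
    then k (T.edge j).1 + ((T.edge j).1.1 : ℤ) + 1 ≤ l j + (j.1 : ℤ) + 1 ∧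
         l j + (j.1 : ℤ) + 1 < k (T.edge j).2 + ((T.edge j).2.1 : ℤ) + 1
    else k (T.edge j).2 + ((T.edge j).2.1 : ℤ) + 1 ≤ l j + (j.1 : ℤ) + 1 ∧
         l j + (j.1 : ℤ) + 1 < k (T.edge j).1 + ((T.edge j).1.1 : ℤ) + 1

/-- The number of inversions of the pair `(T, k)`: edges `j' = (p, q)` with
`¬ (k p + p < k q + q)`. -/
def invCount {n : ℕ} (T : NTree n) (k : Fin n → ℤ) : ℕ :=
  (Finset.univ.filter (fun j : Fin (n - 1) =>
    ¬ (k (T.edge j).1 + ((T.edge j).1.1 : ℤ) + 1 <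
        k (T.edge j).2 + ((T.edge j).2.1 : ℤ) + 1))).card

/-- A tree sequence of order `n`: `T_1, …, T_n` where `T_i` is an `i`-tree. -/
def TreeSeq (n : ℕ) := ∀ i : Fin n, NTree (i.1 + 1)

/-- A Gelfand-Tsetlin tree sequence associated with `𝒯` and `k`: a sequence of
labelings `L i : Fin (i+1) → ℤ` with top labeling `k` and such that each `L (i-1)`
is admissible for `(T_{i+1}, L i)`. -/
def IsGTTreeSeq {n : ℕ} (𝒯 : TreeSeq n) (k : Fin n → ℤ)
    (L : ∀ i : Fin n, Fin (i.1 + 1) → ℤ) : Prop :=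
  (∀ i : Fin n, i.1 + 1 = n → ∀ j : Fin (i.1 + 1),
      L i j = k ⟨j.1, by have := j.isLt; omega⟩) ∧
  ∀ i : Fin n, ∀ hi : 0 < i.1,
    Admissible (𝒯 i) (L i)
      (fun j => L ⟨i.1 - 1, by have := i.isLt; omega⟩
        ⟨j.1, by have := j.isLt; show j.1 < i.1 - 1 + 1; omega⟩)

/-- The sign of a Gelfand-Tsetlin tree sequence:
`(-1) ^ (number of inversions) * sgn 𝒯`. -/
noncomputable def gtSign {n : ℕ} (𝒯 : TreeSeq n)
    (L : ∀ i : Fin n, Fin (i.1 + 1) → ℤ) : ℤ :=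
  (-1) ^ (∑ i : Fin n, invCount (𝒯 i) (L i)) * ∏ i : Fin n, treeSign (𝒯 i)

/-- `L_n(𝒯, k)`: the signed enumeration of all Gelfand-Tsetlin tree sequences
associated with `𝒯` and `k`. -/
noncomputable def Lsum {n : ℕ} (𝒯 : TreeSeq n) (k : Fin n → ℤ) : ℤ :=
  ∑ᶠ L ∈ {L : ∀ i : Fin n, Fin (i.1 + 1) → ℤ | IsGTTreeSeq 𝒯 k L}, gtSign 𝒯 L

/-!
Write `a = shift k` for the labels `k_p + p`. A second row `l` is admissible for `(T_n, k)`
exactly when every shifted edge label `x_j = l_j + j` lies in the half-open interval between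
the labels `a` of the endpoints of the edge `j'`, and `(-1)^(inversions)` is the product of the
orientations of these intervals. Hence `L_n(𝒯, k) = sgn T_n · Σ_x F x` is an oriented sum over
a box of intervals, where `F x = L_{n-1}(T_1, …, T_{n-1}; unshift x)`, and by induction `F`
changes sign under every transposition of its coordinates. The substitution `k ↦ k'` of the
theorem is `a ↦ a ∘ (i j)`.

For an edge `(p, q)`, exchanging `a_p` and `a_q` reverses the interval of that edge and moves
every other interval ending at `p` or `q` by that same interval; the extra terms have two
coordinates of `F` running over one interval and cancel. So the box sum is antisymmetric under
transpositions along edges, and since the tree is connected these generate all transpositions.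
-/

open Finset Function

section

variable {m : ℕ}

def TreeSeq.lastTree (𝒯 : TreeSeq (m + 1)) : NTree (m + 1) := 𝒯 (Fin.last m)

def TreeSeq.init (𝒯 : TreeSeq (m + 1)) : TreeSeq m := fun i => 𝒯 i.castSucc

lemma IsGTTreeSeq.top_eq {𝒯 : TreeSeq (m + 1)} {k : Fin (m + 1) → ℤ}
    {L : ∀ i : Fin (m + 1), Fin (i.1 + 1) → ℤ} (h : IsGTTreeSeq 𝒯 k L) : L (Fin.last m) = k :=
  funext (h.1 (Fin.last m) rfl)

end

namespace GelfandTsetlin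

section BoxSum

variable {ι : Type*} [Fintype ι] [DecidableEq ι]

def orientedIndicator (a b t : ℤ) : ℤ :=
  if a ≤ t ∧ t < b then 1 else if b ≤ t ∧ t < a then -1 else 0

lemma orientedIndicator_swap (a b t : ℤ) :
    orientedIndicator b a t = -orientedIndicator a b t := by
  unfold orientedIndicator; split_ifs <;> omega

lemma orientedIndicator_add (a b c t : ℤ) :
    orientedIndicator a b t + orientedIndicator b c t = orientedIndicator a c t := by
  unfold orientedIndicator; split_ifs <;> omega

lemma orientedIndicator_eq_ite (a b t : ℤ) :
    orientedIndicator a b t =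
      if (if a < b then a ≤ t ∧ t < b else b ≤ t ∧ t < a) then (if a < b then 1 else -1)
      else 0 := by
  unfold orientedIndicator; split_ifs <;> omega

/-- The oriented sum of `F` over the box `∏ i, [α i, β i)`. The truncation to `[-R, R)ᶥ` only
makes the sum finite; it is harmless once `R` bounds all endpoints. -/
noncomputable def boxSum (R : ℤ) (α β : ι → ℤ) (F : (ι → ℤ) → ℤ) : ℤ :=
  ∑ x ∈ Fintype.piFinset fun _ => Ico (-R) R, (∏ i, orientedIndicator (α i) (β i) (x i)) * F x

lemma prod_orientedIndicator_eq_mul {α β α' β' : ι → ℤ} (x : ι → ℤ) (i : ι)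
    (hα : ∀ j ≠ i, α' j = α j) (hβ : ∀ j ≠ i, β' j = β j) :
    ∏ j, orientedIndicator (α' j) (β' j) (x j)
      = orientedIndicator (α' i) (β' i) (x i)
        * ∏ j ∈ univ.erase i, orientedIndicator (α j) (β j) (x j) := by
  rw [← mul_prod_erase univ _ (mem_univ i)]
  congr 1
  refine prod_congr rfl fun j hj => ?_
  rw [hα j (ne_of_mem_erase hj), hβ j (ne_of_mem_erase hj)]

lemma boxSum_update_swap (R : ℤ) (α β : ι → ℤ) (F : (ι → ℤ) → ℤ) (i : ι) :
    boxSum R (update α i (β i)) (update β i (α i)) F = -boxSum R α β F := by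
  rw [boxSum, boxSum, ← sum_neg_distrib]
  refine sum_congr rfl fun x _ => ?_
  rw [prod_orientedIndicator_eq_mul x i (fun j hj => update_of_ne hj _ α)
      (fun j hj => update_of_ne hj _ β),
    prod_orientedIndicator_eq_mul (α := α) (β := β) x i (fun _ _ => rfl) (fun _ _ => rfl),
    update_self, update_self, orientedIndicator_swap]
  ring

lemma boxSum_add_update (R : ℤ) (α β : ι → ℤ) (F : (ι → ℤ) → ℤ) (i : ι) (c : ℤ) :
    boxSum R α (update β i c) F + boxSum R (update α i c) β F = boxSum R α β F := by
  rw [boxSum, boxSum, boxSum, ← sum_add_distrib]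
  refine sum_congr rfl fun x _ => ?_
  rw [prod_orientedIndicator_eq_mul (α := α) (β := β) x i (fun _ _ => rfl)
      (fun j hj => update_of_ne hj _ β),
    prod_orientedIndicator_eq_mul (α := α) (β := β) x i (fun j hj => update_of_ne hj _ α)
      (fun _ _ => rfl),
    prod_orientedIndicator_eq_mul (α := α) (β := β) x i (fun _ _ => rfl) (fun _ _ => rfl),
    update_self, update_self, ← orientedIndicator_add (α i) c (β i)]
  ring

def SwapAntisymm (F : (ι → ℤ) → ℤ) : Prop :=
  ∀ i j, i ≠ j → ∀ x, F (x ∘ Equiv.swap i j) = -F x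

lemma boxSum_eq_zero_of_eq {F : (ι → ℤ) → ℤ} (hF : SwapAntisymm F) (R : ℤ) {α β : ι → ℤ}
    {i j : ι} (hij : i ≠ j) (hα : α i = α j) (hβ : β i = β j) : boxSum R α β F = 0 := by
  set σ := Equiv.swap i j
  have hσ : ∀ {γ : ι → ℤ}, γ i = γ j → ∀ k, γ (σ k) = γ k := fun hγ k => by
    rcases eq_or_ne k i with rfl | hki
    · simp [σ, hγ]
    rcases eq_or_ne k j with rfl | hkj
    · simp [σ, hγ]
    rw [Equiv.swap_apply_of_ne_of_ne hki hkj]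
  have hbox : ∀ x ∈ Fintype.piFinset fun _ : ι => Ico (-R) R,
      x ∘ σ ∈ Fintype.piFinset fun _ : ι => Ico (-R) R := by
    simp only [Fintype.mem_piFinset, comp_apply]
    exact fun x hx k => hx (σ k)
  have hinv : ∀ x : ι → ℤ, x ∘ σ ∘ σ = x := fun x => by
    funext k; simp [σ]
  have hweight : ∀ x : ι → ℤ, ∏ k, orientedIndicator (α k) (β k) ((x ∘ σ) k)
      = ∏ k, orientedIndicator (α k) (β k) (x k) := fun x => by
    calc ∏ k, orientedIndicator (α k) (β k) (x (σ k))
        = ∏ k, orientedIndicator (α (σ k)) (β (σ k)) (x (σ k)) := by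
          simp only [hσ hα, hσ hβ]
      _ = _ := Equiv.prod_comp σ fun k => orientedIndicator (α k) (β k) (x k)
  suffices boxSum R α β F = -boxSum R α β F by omega
  rw [boxSum, ← sum_neg_distrib]
  refine sum_nbij' (· ∘ σ) (· ∘ σ) hbox hbox (fun x _ => hinv x) (fun x _ => hinv x) ?_
  intro x _
  rw [hweight, hF i j hij]
  ring

lemma boxSum_eq_zero_of_sym2_eq {F : (ι → ℤ) → ℤ} (hF : SwapAntisymm F) (R : ℤ)
    {α β : ι → ℤ} {i j : ι} (hij : i ≠ j) (h : s(α i, β i) = s(α j, β j)) :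
    boxSum R α β F = 0 := by
  rcases Sym2.eq_iff.mp h with ⟨hα, hβ⟩ | ⟨hα, hβ⟩
  · exact boxSum_eq_zero_of_eq hF R hij hα hβ
  · rw [← neg_eq_zero, ← boxSum_update_swap R α β F i]
    exact boxSum_eq_zero_of_eq hF R hij (by simp [update_of_ne hij.symm, hβ])
      (by simp [update_of_ne hij.symm, hα])

/-- Changing the `i`-th interval by the `e`-th one (in either orientation) does not change the
box sum: the difference is a box sum in which coordinates `i` and `e` run over the same
interval. -/
lemma boxSum_update_update {F : (ι → ℤ) → ℤ} (hF : SwapAntisymm F) (R : ℤ)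
    {α β : ι → ℤ} {i e : ι} (hie : i ≠ e) {c d : ℤ}
    (hc : c = α i ∨ s(c, α i) = s(α e, β e)) (hd : d = β i ∨ s(β i, d) = s(α e, β e)) :
    boxSum R (update α i c) (update β i d) F = boxSum R α β F := by
  have hleft : boxSum R (update α i c) β F = boxSum R α β F := by
    rcases hc with rfl | hc
    · rw [update_eq_self]
    rw [← boxSum_add_update R (update α i c) β F i (α i), update_idem, update_eq_self,
      boxSum_eq_zero_of_sym2_eq hF R hie (by simpa [update_of_ne hie.symm] using hc), zero_add]
  rw [← hleft]
  rcases hd with rfl | hd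
  · rw [update_eq_self]
  have hzero : boxSum R (update (update α i c) i (β i)) (update β i d) F = 0 :=
    boxSum_eq_zero_of_sym2_eq hF R hie (by simpa [update_of_ne hie.symm] using hd)
  rw [← boxSum_add_update R (update α i c) (update β i d) F i (β i), hzero, add_zero,
    update_idem, update_eq_self]

lemma boxSum_eq_of_sym2_eq {F : (ι → ℤ) → ℤ} (hF : SwapAntisymm F) (R : ℤ)
    {α β α' β' : ι → ℤ} {e : ι} (hαe : α' e = α e) (hβe : β' e = β e)
    (hα : ∀ i, α' i = α i ∨ s(α' i, α i) = s(α e, β e))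
    (hβ : ∀ i, β' i = β i ∨ s(β i, β' i) = s(α e, β e)) :
    boxSum R α' β' F = boxSum R α β F := by
  obtain ⟨s, hs⟩ : ∃ s : Finset ι, ∀ i ∉ s, α' i = α i ∧ β' i = β i := ⟨univ, by simp⟩
  induction s using Finset.induction_on generalizing α' β' with
  | empty =>
    rw [funext fun i => (hs i (notMem_empty i)).1, funext fun i => (hs i (notMem_empty i)).2]
  | insert i s _ ih =>
    have hrest : boxSum R (update α' i (α i)) (update β' i (β i)) F = boxSum R α β F := by
      refine ih ?_ ?_ (fun j => ?_) (fun j => ?_) (fun j hj => ?_)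
      · rcases eq_or_ne e i with rfl | hei <;> simp [update_of_ne, *]
      · rcases eq_or_ne e i with rfl | hei <;> simp [update_of_ne, *]
      · rcases eq_or_ne j i with rfl | hji
        · simp
        · simpa [update_of_ne hji] using hα j
      · rcases eq_or_ne j i with rfl | hji
        · simp
        · simpa [update_of_ne hji] using hβ j
      · rcases eq_or_ne j i with rfl | hji
        · simp
        · simpa [update_of_ne hji] using hs j (by simp [hji, hj])
    rcases eq_or_ne i e with rfl | hie
    · rwa [← hαe, ← hβe, update_eq_self, update_eq_self] at hrest
    have := boxSum_update_update hF R (α := update α' i (α i)) (β := update β' i (β i)) hie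
      (c := α' i) (d := β' i) (by simpa [update_of_ne hie.symm, hαe, hβe] using hα i)
      (by simpa [update_of_ne hie.symm, hαe, hβe] using hβ i)
    rwa [update_idem, update_idem, update_eq_self, update_eq_self, hrest] at this

end BoxSum

section EdgeBoxSum

variable {ι V : Type*} [Fintype ι] [DecidableEq ι]

noncomputable def edgeBoxSum (R : ℤ) (edge : ι → V × V) (F : (ι → ℤ) → ℤ) (a : V → ℤ) : ℤ :=
  boxSum R (fun i => a (edge i).1) (fun i => a (edge i).2) F

variable [DecidableEq V]

lemma comp_swap_eq_or_sym2_eq (a : V → ℤ) (p q v : V) :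
    a (Equiv.swap p q v) = a v ∨ s(a (Equiv.swap p q v), a v) = s(a q, a p) := by
  rw [Equiv.swap_apply_def]
  split_ifs with hp hq
  · exact .inr (by rw [hp])
  · exact .inr (by rw [hq, Sym2.eq_swap])
  · exact .inl rfl

lemma edgeBoxSum_comp_swap_of_edge {F : (ι → ℤ) → ℤ} (hF : SwapAntisymm F) (R : ℤ)
    {edge : ι → V × V} {e : ι} {p q : V} (he : edge e = (p, q)) (a : V → ℤ) :
    edgeBoxSum R edge F (a ∘ Equiv.swap p q) = -edgeBoxSum R edge F a := by
  rw [edgeBoxSum, edgeBoxSum, ← boxSum_update_swap _ _ _ _ e]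
  refine boxSum_eq_of_sym2_eq hF R (e := e) (by simp [he]) (by simp [he]) (fun i => ?_)
    (fun i => ?_)
  · rcases eq_or_ne i e with rfl | hie
    · simp [he]
    · simpa [update_of_ne hie, he] using comp_swap_eq_or_sym2_eq a p q (edge i).1
  · rcases eq_or_ne i e with rfl | hie
    · simp [he]
    · simpa [update_of_ne hie, he, Sym2.eq_swap] using comp_swap_eq_or_sym2_eq a p q (edge i).2

lemma edgeBoxSum_comp_swap_of_adj {F : (ι → ℤ) → ℤ} (hF : SwapAntisymm F) (R : ℤ)
    {edge : ι → V × V} {p q : V}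
    (hpq : (SimpleGraph.fromRel fun u v => ∃ i, edge i = (u, v)).Adj p q) (a : V → ℤ) :
    edgeBoxSum R edge F (a ∘ Equiv.swap p q) = -edgeBoxSum R edge F a := by
  obtain ⟨-, ⟨e, he⟩ | ⟨e, he⟩⟩ := SimpleGraph.fromRel_adj _ p q |>.mp hpq
  · exact edgeBoxSum_comp_swap_of_edge hF R he a
  · rw [Equiv.swap_comm]
    exact edgeBoxSum_comp_swap_of_edge hF R he a

/-- Transpositions along edges suffice, since `swap p r = swap q r * swap p q * swap q r`. -/
lemma edgeBoxSum_comp_swap_of_reachable {F : (ι → ℤ) → ℤ} (hF : SwapAntisymm F) (R : ℤ)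
    {edge : ι → V × V} {p q : V}
    (hpq : (SimpleGraph.fromRel fun u v => ∃ i, edge i = (u, v)).Reachable p q) (hne : p ≠ q)
    (a : V → ℤ) :
    edgeBoxSum R edge F (a ∘ Equiv.swap p q) = -edgeBoxSum R edge F a := by
  suffices key : ∀ a, edgeBoxSum R edge F (a ∘ Equiv.swap p q)
      = if p = q then edgeBoxSum R edge F a else -edgeBoxSum R edge F a by
    rw [key, if_neg hne]
  clear hne
  rw [SimpleGraph.reachable_iff_reflTransGen] at hpq
  induction hpq with
  | refl => simp
  | @tail q r _ hqr ih =>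
    intro a
    by_cases hpr : p = r
    · simp [hpr]
    rw [if_neg hpr]
    by_cases hpq : p = q
    · subst hpq
      exact edgeBoxSum_comp_swap_of_adj hF R hqr a
    have hconj : a ∘ Equiv.swap p r = ((a ∘ Equiv.swap q r) ∘ Equiv.swap p q) ∘ Equiv.swap q r := by
      funext v
      rw [Equiv.swap_comm, ← Equiv.swap_mul_swap_mul_swap hpq hpr]
      rfl
    rw [hconj, edgeBoxSum_comp_swap_of_adj hF R hqr, ih, if_neg hpq,
      edgeBoxSum_comp_swap_of_adj hF R hqr, neg_neg]

end EdgeBoxSum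

variable {n m : ℕ}

/-- The paper's label `k_t + t` of a vertex or edge, with `t` counted from `1`. -/
def shift (k : Fin n → ℤ) : Fin n → ℤ := fun t => k t + (t.1 : ℤ) + 1

def unshift (x : Fin n → ℤ) : Fin n → ℤ := fun t => x t - (t.1 : ℤ) - 1

@[simp] lemma shift_unshift (x : Fin n → ℤ) : shift (unshift x) = x := by
  funext t; simp only [shift, unshift]; ring

@[simp] lemma unshift_shift (k : Fin n → ℤ) : unshift (shift k) = k := by
  funext t; simp only [shift, unshift]; ring

lemma unshift_injective : Injective (unshift : (Fin n → ℤ) → Fin n → ℤ) := fun x y h => by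
  rw [← shift_unshift x, h, shift_unshift]

@[simp] lemma unshift_add_add_one (x : Fin n → ℤ) (t : Fin n) :
    unshift x t + (t.1 : ℤ) + 1 = x t := by
  simp only [unshift]; ring

lemma unshift_comp_swap_shift (k : Fin n → ℤ) (i j : Fin n) :
    unshift (shift k ∘ Equiv.swap i j) = fun t =>
      if t = i then k j + ((j.1 : ℤ) - (i.1 : ℤ))
      else if t = j then k i + ((i.1 : ℤ) - (j.1 : ℤ)) else k t := by
  funext t
  simp only [unshift, shift, comp_apply, Equiv.swap_apply_def]
  split_ifs with hi hj <;> subst_vars <;> ring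

open Classical in
lemma prod_orientedIndicator_shift (T : NTree (m + 1)) (k : Fin (m + 1) → ℤ) (x : Fin m → ℤ) :
    ∏ j, orientedIndicator (shift k (T.edge j).1) (shift k (T.edge j).2) (x j)
      = if Admissible T k (unshift x) then (-1) ^ invCount T k else 0 := by
  simp only [orientedIndicator_eq_ite]
  rw [Fintype.prod_ite_zero, prod_ite, prod_const_one, one_mul, prod_const]
  simp only [Admissible, unshift_add_add_one, invCount, shift]
  congr

def withTopRow (L' : ∀ i : Fin m, Fin (i.1 + 1) → ℤ) (k : Fin (m + 1) → ℤ) :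
    ∀ i : Fin (m + 1), Fin (i.1 + 1) → ℤ :=
  fun i => if h : i.1 < m then L' ⟨i.1, h⟩ else fun j => k ⟨j.1, by omega⟩

lemma withTopRow_castSucc (L' : ∀ i : Fin m, Fin (i.1 + 1) → ℤ) (k : Fin (m + 1) → ℤ)
    (i : Fin m) : withTopRow L' k i.castSucc = L' i :=
  dif_pos i.isLt

lemma withTopRow_last (L' : ∀ i : Fin m, Fin (i.1 + 1) → ℤ) (k : Fin (m + 1) → ℤ) :
    withTopRow L' k (Fin.last m) = k :=
  dif_neg (lt_irrefl m)

lemma withTopRow_injective (k : Fin (m + 1) → ℤ) : Injective fun L' => withTopRow L' k :=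
  fun L₁ L₂ h => funext fun i => by
    rw [← withTopRow_castSucc L₁ k, ← withTopRow_castSucc L₂ k]
    exact congrFun h _

lemma setOf_isGTTreeSeq (𝒯 : TreeSeq (m + 2)) (k : Fin (m + 2) → ℤ) :
    {L | IsGTTreeSeq 𝒯 k L} = ⋃ x ∈ {x : Fin (m + 1) → ℤ | Admissible 𝒯.lastTree k (unshift x)},
      (fun L' => withTopRow L' k) '' {L' | IsGTTreeSeq 𝒯.init (unshift x) L'} := by
  ext L
  simp only [Set.mem_ofPred_eq, Set.mem_iUnion, Set.mem_image, exists_prop]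
  constructor
  · intro hL
    refine ⟨shift (L (Fin.last m).castSucc), ?_, fun i => L i.castSucc, ⟨?_, ?_⟩, ?_⟩
    · have := hL.2 (Fin.last (m + 1)) (Nat.succ_pos m)
      rw [hL.top_eq] at this
      rw [unshift_shift]
      exact this
    · intro i hi j
      obtain rfl : i = Fin.last m := Fin.ext (by simpa using hi)
      simp
    · intro i hi
      exact hL.2 i.castSucc hi
    · funext i
      rcases Fin.eq_castSucc_or_eq_last i with ⟨i, rfl⟩ | rfl
      · exact withTopRow_castSucc _ k i
      · rw [withTopRow_last, hL.top_eq]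
  · rintro ⟨x, hx, L', hL', rfl⟩
    refine ⟨fun i hi j => ?_, fun i hi => ?_⟩
    · obtain rfl : i = Fin.last (m + 1) := Fin.ext (by simpa using hi)
      simp [withTopRow]
    · rcases Fin.eq_castSucc_or_eq_last i with ⟨i, rfl⟩ | rfl
      · have hi' : i.1 - 1 ≤ m := by omega
        rw [withTopRow_castSucc]
        simpa [withTopRow, TreeSeq.init, hi'] using hL'.2 i hi
      · show Admissible 𝒯.lastTree (withTopRow L' k (Fin.last (m + 1)))
          (withTopRow L' k (Fin.last m).castSucc)
        rwa [withTopRow_last, withTopRow_castSucc, hL'.top_eq]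

lemma setOf_admissible_subset (T : NTree (m + 1)) (k : Fin (m + 1) → ℤ) {R : ℤ}
    (hR : ∀ t, |shift k t| ≤ R) :
    {x : Fin m → ℤ | Admissible T k (unshift x)}
      ⊆ ↑(Fintype.piFinset fun _ : Fin m => Ico (-R) R) := by
  intro x hx
  simp only [Fintype.coe_piFinset, Set.mem_pi, Set.mem_univ, coe_Ico, Set.mem_Ico, forall_const]
  intro j
  have hj := hx j
  have h₁ := abs_le.mp (hR (T.edge j).1)
  have h₂ := abs_le.mp (hR (T.edge j).2)
  simp only [unshift_add_add_one] at hj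
  simp only [shift] at h₁ h₂
  split_ifs at hj <;> omega

lemma setOf_admissible_finite (T : NTree (m + 1)) (k : Fin (m + 1) → ℤ) :
    {x : Fin m → ℤ | Admissible T k (unshift x)}.Finite :=
  (Fintype.piFinset _).finite_toSet.subset <| setOf_admissible_subset T k fun t =>
    single_le_sum (f := fun t => |shift k t|) (fun _ _ => abs_nonneg _) (mem_univ t)

lemma setOf_isGTTreeSeq_finite : ∀ {n : ℕ} (𝒯 : TreeSeq n) (k : Fin n → ℤ),
    {L | IsGTTreeSeq 𝒯 k L}.Finite
  | 0, _, _ => Set.subsingleton_of_subsingleton.finite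
  | 1, _, _ => Set.Subsingleton.finite fun L₁ h₁ L₂ h₂ => funext fun i => by
      obtain rfl := Subsingleton.elim i (Fin.last 0)
      exact h₁.top_eq.trans h₂.top_eq.symm
  | _ + 2, 𝒯, k => by
      rw [setOf_isGTTreeSeq]
      exact (setOf_admissible_finite _ k).biUnion fun x _ =>
        (setOf_isGTTreeSeq_finite _ _).image _

open Classical in
lemma finsum_admissible_eq_edgeBoxSum (T : NTree (m + 1)) (k : Fin (m + 1) → ℤ) {R : ℤ}
    (hR : ∀ t, |shift k t| ≤ R) (G : (Fin m → ℤ) → ℤ) :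
    ∑ᶠ x ∈ {x : Fin m → ℤ | Admissible T k (unshift x)}, (-1) ^ invCount T k * G x
      = edgeBoxSum R T.edge G (shift k) := by
  rw [finsum_mem_eq_sum_of_subset (t := (Fintype.piFinset fun _ : Fin m => Ico (-R) R).filter
      fun x : Fin m → ℤ => Admissible T k (unshift x)) _
      (fun x hx => mem_filter.mpr ⟨setOf_admissible_subset T k hR hx.1, hx.1⟩)
      (fun x hx => (mem_filter.mp hx).2),
    sum_filter, edgeBoxSum, boxSum]
  refine sum_congr rfl fun x _ => ?_
  rw [prod_orientedIndicator_shift]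
  split_ifs <;> simp

lemma gtSign_withTopRow (𝒯 : TreeSeq (m + 1)) (k : Fin (m + 1) → ℤ)
    (L' : ∀ i : Fin m, Fin (i.1 + 1) → ℤ) :
    gtSign 𝒯 (withTopRow L' k)
      = (-1) ^ invCount 𝒯.lastTree k * treeSign 𝒯.lastTree * gtSign 𝒯.init L' := by
  simp only [gtSign, Fin.sum_univ_castSucc, Fin.prod_univ_castSucc, withTopRow_castSucc,
    withTopRow_last, pow_add, TreeSeq.init, TreeSeq.lastTree]
  ring

lemma Lsum_eq_treeSign_mul_edgeBoxSum (𝒯 : TreeSeq (m + 2)) (k : Fin (m + 2) → ℤ) {R : ℤ}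
    (hR : ∀ t, |shift k t| ≤ R) :
    Lsum 𝒯 k = treeSign 𝒯.lastTree
      * edgeBoxSum R 𝒯.lastTree.edge (fun x => Lsum 𝒯.init (unshift x)) (shift k) := by
  have hdisj : Set.PairwiseDisjoint {x : Fin (m + 1) → ℤ | Admissible 𝒯.lastTree k (unshift x)}
      fun x => (fun L' => withTopRow L' k) '' {L' | IsGTTreeSeq 𝒯.init (unshift x) L'} := by
    intro x _ y _ hxy
    refine Set.disjoint_left.mpr ?_
    rintro _ ⟨L₁, h₁, rfl⟩ ⟨L₂, h₂, hL⟩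
    obtain rfl := withTopRow_injective k hL
    exact hxy (unshift_injective (h₁.top_eq.symm.trans h₂.top_eq))
  rw [Lsum, setOf_isGTTreeSeq, finsum_mem_biUnion hdisj (setOf_admissible_finite _ k)
      fun x _ => (setOf_isGTTreeSeq_finite _ _).image _,
    ← finsum_admissible_eq_edgeBoxSum _ k hR, mul_finsum_mem]
  refine finsum_congr fun x => finsum_congr fun _ => ?_
  rw [finsum_mem_image (withTopRow_injective k).injOn, Lsum, mul_finsum_mem, mul_finsum_mem]
  refine finsum_congr fun L' => finsum_congr fun _ => ?_
  rw [gtSign_withTopRow]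
  ring

lemma swapAntisymm_Lsum_unshift : ∀ {n : ℕ} (𝒯 : TreeSeq n),
    SwapAntisymm fun x => Lsum 𝒯 (unshift x)
  | 0, _ => fun i => i.elim0
  | 1, _ => fun i j hij => absurd (Subsingleton.elim i j) hij
  | _ + 2, 𝒯 => fun i j hij a => by
      have hR : ∀ t, |a t| ≤ ∑ t, |a t| := fun t =>
        single_le_sum (f := fun t => |a t|) (fun _ _ => abs_nonneg _) (mem_univ t)
      dsimp only
      rw [Lsum_eq_treeSign_mul_edgeBoxSum 𝒯 _ (by simpa using fun t => hR (Equiv.swap i j t)),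
        Lsum_eq_treeSign_mul_edgeBoxSum 𝒯 _ (by simpa using hR), shift_unshift, shift_unshift,
        edgeBoxSum_comp_swap_of_reachable (swapAntisymm_Lsum_unshift _) _
          (𝒯.lastTree.conn.preconnected i j) hij, mul_neg]

end GelfandTsetlin

open GelfandTsetlin

theorem gt_tree_sequence_shift_antisymmetry_general (n : ℕ)
    (𝒯 : TreeSeq n) (k : Fin n → ℤ) (i j : Fin n) (hij : i < j) :
    Lsum 𝒯 k =
      - Lsum 𝒯 (fun t =>
          if t = i then k j + ((j.1 : ℤ) - (i.1 : ℤ))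
          else if t = j then k i + ((i.1 : ℤ) - (j.1 : ℤ))
          else k t) := by
  have h := swapAntisymm_Lsum_unshift 𝒯 i j hij.ne (shift k)
  simp only [unshift_shift] at h
  rw [← unshift_comp_swap_shift, h, neg_neg]

/-- Shift-antisymmetry: replacing `(k_i, k_j)` by `(k_j + j - i, k_i + i - j)` reverses
the sign of the signed enumeration of Gelfand-Tsetlin tree sequences. -/
theorem gt_tree_sequence_shift_antisymmetry (n : ℕ) (hn : 1 ≤ n)
    (𝒯 : TreeSeq n) (k : Fin n → ℤ) (i j : Fin n) (hij : i < j) :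
    Lsum 𝒯 k =
      - Lsum 𝒯 (fun t =>
          if t = i then k j + ((j.1 : ℤ) - (i.1 : ℤ))
          else if t = j then k i + ((i.1 : ℤ) - (j.1 : ℤ))
          else k t) :=
  gt_tree_sequence_shift_antisymmetry_general n 𝒯 k i j hij
end

section
/- Let n ≥ 1 and ρ ≥ 1, and let P : ℤ^n → ℚ be the function P(k) = ∏_{1 ≤ i < j ≤ n} (k_j − k_i + j − i). Then e_ρ(Δ_1,...,Δ_n) P = 0, where Δ_i is the forward difference operator in the i-th coordinate and e_ρ is the ρ-th elementary symmetric polynomial in n variables. -/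
/-- `kup k i t` shifts the `i`-th coordinate of `k` by `t`. -/
def kup {n : ℕ} (k : Fin n → ℤ) (i : Fin n) (t : ℤ) : Fin n → ℤ :=
  fun j => if j = i then k j + t else k j

/-- The forward difference operator `Δ_i = E_i - id` on functions `ℤ^n → ℚ`. -/
def DeltaOp (n : ℕ) (i : Fin n) : ((Fin n → ℤ) → ℚ) → ((Fin n → ℤ) → ℚ) :=
  fun A k => A (kup k i 1) - A k

/-- The backward difference operator `δ_i = id - E_i⁻¹` on functions `ℤ^n → ℚ`. -/
def deltaOp (n : ℕ) (i : Fin n) : ((Fin n → ℤ) → ℚ) → ((Fin n → ℤ) → ℚ) :=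
  fun A k => A k - A (kup k i (-1))

/-- The product (composition) of the commuting operators `F i`, `i ∈ S`. -/
noncomputable def opProd (n : ℕ) (F : Fin n → ((Fin n → ℤ) → ℚ) → ((Fin n → ℤ) → ℚ))
    (S : Finset (Fin n)) : ((Fin n → ℤ) → ℚ) → ((Fin n → ℤ) → ℚ) :=
  S.toList.foldr (fun i f => F i ∘ f) id

/-- The `ρ`-th elementary symmetric polynomial `e_ρ(F 1, …, F n)` of the commuting
operators `F i`, applied to a function `ℤ^n → ℚ`. -/
noncomputable def esymmOp (n ρ : ℕ) (F : Fin n → ((Fin n → ℤ) → ℚ) → ((Fin n → ℤ) → ℚ)) :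
    ((Fin n → ℤ) → ℚ) → ((Fin n → ℤ) → ℚ) :=
  fun A k => ∑ S ∈ Finset.powersetCard ρ (Finset.univ : Finset (Fin n)), opProd n F S A k

/-!
Writing `x_i = k_i + i`, the product is the Vandermonde determinant `det (x_i ^ j)`, a multilinear
function of its rows, and each row depends on a single coordinate `k_i`. Hence `Δ_S P` (for
`Δ_S = ∏_{i ∈ S} Δ_i`) is the determinant in which the rows indexed by `S` are replaced by their
differences `(x_i + 1) ^ j - x_i ^ j`, and `e_ρ(Δ) P` is the coefficient of `s ^ ρ` in the
determinant of the rows `x_i ^ j + s ((x_i + 1) ^ j - x_i ^ j)`. That matrix is the evaluation at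
the `x_i` of the monic polynomials `X ^ j + s ((X + 1) ^ j - X ^ j)` of degree `j`, so its
determinant is the Vandermonde determinant again, independent of `s`.
-/

open Finset Polynomial

theorem MultilinearMap.sum_powersetCard_piecewise_eq_zero {R ι : Type*} {M : ι → Type*}
    [CommRing R] [IsDomain R] [Infinite R] [Fintype ι] [DecidableEq ι]
    [∀ i, AddCommGroup (M i)] [∀ i, Module R (M i)] (f : MultilinearMap R M R)
    {u w : ∀ i, M i} (h : ∀ s : R, f (u + s • w) = f u) {ρ : ℕ} (hρ : ρ ≠ 0) :
    ∑ S ∈ powersetCard ρ univ, f (S.piecewise w u) = 0 := by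
  have hpoly : ∑ S : Finset ι, C (f (S.piecewise w u)) * X ^ S.card = C (f u) := by
    refine Polynomial.funext fun s => ?_
    have hsmul (S : Finset ι) : S.piecewise (s • w) u
        = S.piecewise (fun i => s • S.piecewise w u i) (S.piecewise w u) := by
      ext i; by_cases hi : i ∈ S <;> simp [hi]
    simp only [eval_finsetSum, eval_mul, eval_C, eval_pow, eval_X, ← h s, add_comm u,
      f.map_add_univ, hsmul, f.map_piecewise_smul, prod_const, smul_eq_mul, mul_comm]
  simpa [finsetSum_coeff, coeff_C_mul_X_pow, coeff_C, hρ, powersetCard_eq_filter, sum_filter,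
    eq_comm] using congrArg (coeff · ρ) hpoly

theorem Matrix.det_of_pow_add_smul_sub_pow {R : Type*} [CommRing R] [Nontrivial R] {n : ℕ}
    (v : Fin n → R) (s : R) :
    (of fun i j : Fin n => v i ^ (j : ℕ) + s * ((v i + 1) ^ (j : ℕ) - v i ^ (j : ℕ))).det
      = (vandermonde v).det := by
  have hlt (j : ℕ) : (s • ((X + 1) ^ j - X ^ j) : R[X]).degree < (X ^ j : R[X]).degree := by
    have hmonic : ((X + 1) ^ j : R[X]).Monic := (monic_X_add_C 1).pow j
    have hdeg : ((X + 1) ^ j : R[X]).degree = (X ^ j : R[X]).degree := by compute_degree!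
    calc _ ≤ ((X + 1) ^ j - X ^ j : R[X]).degree := degree_smul_le _ _
      _ < _ := hdeg ▸ degree_sub_lt_left hdeg hmonic.ne_zero
          (by rw [hmonic.leadingCoeff, (monic_X_pow j).leadingCoeff])
  rw [det_eval_matrixOfPolynomials_eq_det_vandermonde v
    (fun j => X ^ (j : ℕ) + s • ((X + 1) ^ (j : ℕ) - X ^ (j : ℕ)))
    (fun j => by rw [natDegree_add_eq_left_of_degree_lt (hlt j), natDegree_X_pow])
    (fun j => (monic_X_pow _).add_of_left (hlt j))]
  simp

theorem Matrix.det_vandermonde_eq_prod_Iio {R : Type*} [CommRing R] {n : ℕ} (v : Fin n → R) :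
    (vandermonde v).det = ∏ q : Fin n, ∏ p ∈ Iio q, (v q - v p) := by
  rw [det_vandermonde]
  exact prod_comm' (by simp [and_comm])

section DifferenceOperators

variable {n : ℕ}

theorem kup_kup_comm (k : Fin n → ℤ) (i j : Fin n) (s t : ℤ) :
    kup (kup k i s) j t = kup (kup k j t) i s := by
  ext m
  simp only [kup]
  split_ifs <;> omega

theorem DeltaOp_comm (i j : Fin n) (A : (Fin n → ℤ) → ℚ) :
    DeltaOp n i (DeltaOp n j A) = DeltaOp n j (DeltaOp n i A) := by
  ext k
  simp only [DeltaOp, kup_kup_comm k i j]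
  ring

instance DeltaOp.leftCommutative :
    LeftCommutative fun (i : Fin n) (F : ((Fin n → ℤ) → ℚ) → (Fin n → ℤ) → ℚ) => DeltaOp n i ∘ F :=
  ⟨fun i j F => funext fun A => DeltaOp_comm i j (F A)⟩

theorem opProd_insert {F : Fin n → ((Fin n → ℤ) → ℚ) → (Fin n → ℤ) → ℚ}
    [LeftCommutative fun i (G : ((Fin n → ℤ) → ℚ) → (Fin n → ℤ) → ℚ) => F i ∘ G]
    {a : Fin n} {S : Finset (Fin n)} (ha : a ∉ S) :
    opProd n F (insert a S) = F a ∘ opProd n F S := by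
  unfold opProd
  rw [(toList_insert ha).foldr_eq]
  rfl

variable {M : Fin n → Type*} [∀ i, AddCommGroup (M i)] [∀ i, Module ℚ (M i)]
  (f : MultilinearMap ℚ M ℚ)

theorem DeltaOp_multilinear (g : ∀ i, ℤ → M i) (a : Fin n) :
    DeltaOp n a (fun k => f fun i => g i (k i))
      = fun k => f fun i => Function.update g a (fwdDiff 1 (g a)) i (k i) := by
  ext k
  have hshift : (fun i => g i (kup k a 1 i))
      = Function.update (fun i => g i (k i)) a (g a (k a + 1)) := by
    ext i
    by_cases h : i = a
    · subst h; simp [kup]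
    · simp [kup, h]
  have hdiff : (fun i => Function.update g a (fwdDiff 1 (g a)) i (k i))
      = Function.update (fun i => g i (k i)) a (g a (k a + 1) - g a (k a)) := by
    ext i
    by_cases h : i = a
    · subst h; simp [fwdDiff]
    · simp [h]
  rw [DeltaOp, hshift, hdiff, f.map_update_sub, Function.update_eq_self]

theorem opProd_DeltaOp_multilinear (g : ∀ i, ℤ → M i) (S : Finset (Fin n)) :
    opProd n (DeltaOp n) S (fun k => f fun i => g i (k i))
      = fun k => f fun i => S.piecewise (fun i => fwdDiff 1 (g i)) g i (k i) := by
  induction S using Finset.induction with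
  | empty => simp [opProd]
  | insert a S ha ih =>
    rw [opProd_insert ha, Function.comp_apply, ih, DeltaOp_multilinear, piecewise_insert,
      S.piecewise_eq_of_notMem _ _ ha]

theorem esymmOp_DeltaOp_multilinear (ρ : ℕ) (g : ∀ i, ℤ → M i) (k : Fin n → ℤ) :
    esymmOp n ρ (DeltaOp n) (fun k => f fun i => g i (k i)) k
      = ∑ S ∈ powersetCard ρ univ,
          f (S.piecewise (fun i => fwdDiff 1 (g i) (k i)) (fun i => g i (k i))) := by
  refine sum_congr rfl fun S _ => ?_
  rw [opProd_DeltaOp_multilinear]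
  refine congrArg f (funext fun i => ?_)
  by_cases h : i ∈ S <;> simp [h]

end DifferenceOperators

theorem prod_Iio_eq_det_vandermonde {n : ℕ} (k : Fin n → ℤ) :
    ∏ q : Fin n, ∏ p ∈ Iio q, ((k q : ℚ) - (k p : ℚ) + (q.1 : ℚ) - (p.1 : ℚ))
      = (Matrix.vandermonde fun i => (k i : ℚ) + i).det := by
  rw [Matrix.det_vandermonde_eq_prod_Iio]
  exact prod_congr rfl fun q _ => prod_congr rfl fun p _ => by ring

theorem esymm_delta_annihilates_product_general (n : ℕ) (ρ : ℕ) (hρ : 1 ≤ ρ) :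
    esymmOp n ρ (DeltaOp n)
      (fun k => ∏ q : Fin n, ∏ p ∈ Finset.Iio q,
        ((k q : ℚ) - (k p : ℚ) + (q.1 : ℚ) - (p.1 : ℚ))) = 0 := by
  let f : MultilinearMap ℚ (fun _ : Fin n => Fin n → ℚ) ℚ :=
    Matrix.detRowAlternating.toMultilinearMap
  let g : Fin n → ℤ → Fin n → ℚ := fun i m j => ((m : ℚ) + i) ^ (j : ℕ)
  ext k
  rw [funext prod_Iio_eq_det_vandermonde, Pi.zero_apply]
  change esymmOp n ρ (DeltaOp n) (fun k => f fun i => g i (k i)) k = 0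
  rw [esymmOp_DeltaOp_multilinear]
  refine f.sum_powersetCard_piecewise_eq_zero (fun s => ?_) (Nat.one_le_iff_ne_zero.mp hρ)
  change (Matrix.of fun i j : Fin n => _).det = (Matrix.vandermonde fun i => (k i : ℚ) + i).det
  rw [← Matrix.det_of_pow_add_smul_sub_pow _ s]
  congr
  ext i j
  simp [g, fwdDiff, add_right_comm]

/-- For `ρ ≥ 1`, the operator `e_ρ(Δ_1, …, Δ_n)` annihilates
`P(k) = ∏_{1 ≤ i < j ≤ n} (k_j - k_i + j - i)`. -/
theorem esymm_delta_annihilates_product (n : ℕ) (hn : 1 ≤ n) (ρ : ℕ) (hρ : 1 ≤ ρ) :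
    esymmOp n ρ (DeltaOp n)
      (fun k => ∏ q : Fin n, ∏ p ∈ Finset.Iio q,
        ((k q : ℚ) - (k p : ℚ) + (q.1 : ℚ) - (p.1 : ℚ))) = 0 :=
  esymm_delta_annihilates_product_general n ρ hρ
end

section
/- Let n ≥ 1 and let A : ℤ^n → ℚ satisfy e_ρ(Δ_1,...,Δ_n) A = 0 for all ρ with 1 ≤ ρ ≤ n. Then for every symmetric polynomial p ∈ ℚ[X_1,...,X_n] (i.e., p invariant under all permutations of the variables), one has p(E_1,...,E_n) A = p(1,1,...,1) · A. -/
/-- `applyShifts p A` is the operator `p(E_1, …, E_n)` applied to `A`, where `E_i` is the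
shift operator in the `i`-th coordinate: the monomial `X^m` acts as the shift by `m`. -/
noncomputable def applyShifts {n : ℕ} (p : MvPolynomial (Fin n) ℚ)
    (A : (Fin n → ℤ) → ℚ) : (Fin n → ℤ) → ℚ :=
  fun k => ∑ m ∈ p.support, p.coeff m * A (fun j => k j + (m j : ℤ))

/-!
Write `E_i = 1 + Δ_i`. A symmetric polynomial `p(X)` equals `r(X - 1)` for the symmetric
polynomial `r(Y) = p(Y + 1)`, and by the fundamental theorem `r = Q(e_1(Y), …, e_n(Y))`.
Hence `p(E) = Q(e_1(Δ), …, e_n(Δ))` acts on `A` as `Q(0, …, 0) = r(0) = p(1)`. In other words: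
the polynomials acting on `A` as multiplication by their value at `1` form a subalgebra, and it
contains every `e_ρ(X - 1)`.
-/

open MvPolynomial

section eigenSubalgebra

variable {R S M : Type*} [CommSemiring R] [Semiring S] [Algebra R S] [AddCommMonoid M]
  [Module R M]

def eigenSubalgebra (φ : S →ₐ[R] Module.End R M) (χ : S →ₐ[R] R) (v : M) :
    Subalgebra R S where
  carrier := {s | φ s v = χ s • v}
  mul_mem' {a b} ha hb := by
    simp only [Set.mem_ofPred_eq, map_mul, Module.End.mul_apply] at ha hb ⊢
    rw [hb, map_smul, ha, smul_smul, mul_comm]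
  add_mem' {a b} ha hb := by
    simp only [Set.mem_ofPred_eq, map_add, LinearMap.add_apply, add_smul] at ha hb ⊢
    rw [ha, hb]
  algebraMap_mem' r := by
    simp [Algebra.algebraMap_eq_smul_one]

@[simp]
theorem mem_eigenSubalgebra {φ : S →ₐ[R] Module.End R M} {χ : S →ₐ[R] R} {v : M} {s : S} :
    s ∈ eigenSubalgebra φ χ v ↔ φ s v = χ s • v :=
  Iff.rfl

end eigenSubalgebra

theorem List.foldr_comp_coe_eq_coe_prod {ι R M : Type*} [Semiring R] [AddCommMonoid M]
    [Module R M] (f : ι → Module.End R M) (l : List ι) :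
    l.foldr (fun i g => ⇑(f i) ∘ g) id = ⇑(l.map f).prod := by
  induction l with
  | nil => rfl
  | cons i l ih => rw [List.foldr_cons, ih, List.map_cons, List.prod_cons, Module.End.coe_mul]

namespace MvPolynomial

theorem IsSymmetric.aeval_X_add_C {σ R : Type*} [CommSemiring R] {p : MvPolynomial σ R}
    (hp : p.IsSymmetric) (c : R) : (aeval (fun i => X i + MvPolynomial.C c) p).IsSymmetric := by
  intro e
  rw [comp_aeval_apply]
  conv_rhs => rw [← hp e, aeval_rename]
  simp [Function.comp_def]

theorem IsSymmetric.mem_adjoin_esymm_X_sub_C {R : Type*} [CommRing R] {n : ℕ}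
    {p : MvPolynomial (Fin n) R} (hp : p.IsSymmetric) (c : R) :
    p ∈ Algebra.adjoin R
      (Set.range fun i : Fin n =>
        aeval (fun j => X j - MvPolynomial.C c) (esymm (Fin n) R (i + 1))) := by
  obtain ⟨q, hq⟩ := esymmAlgHom_surjective (σ := Fin n) (R := R) (n := n) (by simp)
    ⟨_, hp.aeval_X_add_C c⟩
  rw [Algebra.adjoin_range_eq_range_aeval]
  refine ⟨q, ?_⟩
  rw [AlgHom.toRingHom_eq_coe, RingHom.coe_coe, ← comp_aeval_apply, ← esymmAlgHom_apply, hq, comp_aeval_apply]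
  simp

theorem eval_aeval_X_sub_C_esymm {σ R : Type*} [CommRing R] [Fintype σ] (c : R) {ρ : ℕ}
    (hρ : ρ ≠ 0) : eval (fun _ => c) (aeval (fun i => X i - C c) (esymm σ R ρ)) = 0 := by
  classical
  rw [esymm, map_sum, map_sum]
  refine Finset.sum_eq_zero fun s hs => ?_
  obtain ⟨i, hi⟩ : s.Nonempty := by
    rw [Finset.mem_powersetCard] at hs
    exact Finset.card_pos.mp (hs.2 ▸ Nat.pos_of_ne_zero hρ)
  rw [map_prod, map_prod]
  exact Finset.prod_eq_zero hi (by simp)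

end MvPolynomial

section shift

variable {n : ℕ}

def shiftHom (n : ℕ) : Multiplicative (Fin n →₀ ℕ) →* Module.End ℚ ((Fin n → ℤ) → ℚ) where
  toFun m := LinearMap.funLeft ℚ ℚ fun k j => k j + (m.toAdd j : ℤ)
  map_one' := by ext; simp
  map_mul' m m' := by
    ext A k
    simp only [toAdd_mul, Finsupp.add_apply, Nat.cast_add, Module.End.mul_apply,
      LinearMap.funLeft_apply]
    congr 1
    funext j
    ring

noncomputable def shiftAlgHom (n : ℕ) :
    MvPolynomial (Fin n) ℚ →ₐ[ℚ] Module.End ℚ ((Fin n → ℤ) → ℚ) :=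
  AddMonoidAlgebra.lift ℚ _ _ (shiftHom n)

theorem shiftAlgHom_apply (p : MvPolynomial (Fin n) ℚ) (A : (Fin n → ℤ) → ℚ) :
    shiftAlgHom n p A = applyShifts p A := by
  ext k
  rw [shiftAlgHom, AddMonoidAlgebra.lift_apply, MvPolynomial.sum_def, LinearMap.sum_apply,
    Finset.sum_apply]
  rfl

theorem shiftAlgHom_X (i : Fin n) (A : (Fin n → ℤ) → ℚ) :
    shiftAlgHom n (X i) A = fun k => A (kup k i 1) := by
  funext k
  simp only [shiftAlgHom_apply, applyShifts, support_X, Finset.sum_singleton, coeff_X, if_true,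
    one_mul]
  congr 1
  funext j
  simp only [kup, Finsupp.single_apply, eq_comm (a := j)]
  split_ifs <;> simp

theorem coe_shiftAlgHom_X_sub_one (i : Fin n) : ⇑(shiftAlgHom n (X i - 1)) = DeltaOp n i := by
  ext A k
  simp [shiftAlgHom_X, DeltaOp]

theorem opProd_DeltaOp (S : Finset (Fin n)) :
    opProd n (DeltaOp n) S = shiftAlgHom n (∏ i ∈ S, (X i - 1)) := by
  simp_rw [opProd, ← coe_shiftAlgHom_X_sub_one, List.foldr_comp_coe_eq_coe_prod]
  rw [← Function.comp_def (shiftAlgHom n), ← List.map_map, ← map_list_prod,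
    Finset.prod_map_toList]

theorem esymmOp_DeltaOp (ρ : ℕ) :
    esymmOp n ρ (DeltaOp n) = shiftAlgHom n (aeval (fun i => X i - C 1) (esymm (Fin n) ℚ ρ)) := by
  funext A k
  simp only [esymmOp, opProd_DeltaOp, esymm, map_sum, map_prod, aeval_X, map_one,
    LinearMap.sum_apply, Finset.sum_apply]

end shift

theorem symm_poly_shift_eval_general (n : ℕ) (A : (Fin n → ℤ) → ℚ)
    (h : ∀ ρ : ℕ, 1 ≤ ρ → ρ ≤ n → esymmOp n ρ (DeltaOp n) A = 0)
    (p : MvPolynomial (Fin n) ℚ) (hp : p.IsSymmetric) :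
    applyShifts p A = fun k => MvPolynomial.eval (fun _ => (1 : ℚ)) p * A k := by
  have hesymm (i : Fin n) : aeval (fun j => X j - C 1) (esymm (Fin n) ℚ (i + 1)) ∈
      eigenSubalgebra (shiftAlgHom n) (aeval fun _ => (1 : ℚ)) A := by
    rw [mem_eigenSubalgebra, ← esymmOp_DeltaOp, h _ (by omega) i.2, aeval_eq_eval,
      eval_aeval_X_sub_C_esymm 1 (by omega), zero_smul]
  have hpA := Algebra.adjoin_le (Set.range_subset_iff.2 hesymm) (hp.mem_adjoin_esymm_X_sub_C 1)
  funext k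
  rw [← shiftAlgHom_apply, mem_eigenSubalgebra.1 hpA, aeval_eq_eval]
  rfl

/-- If `e_ρ(Δ_1, …, Δ_n) A = 0` for all `1 ≤ ρ ≤ n`, then every symmetric polynomial
`p` satisfies `p(E_1, …, E_n) A = p(1, …, 1) · A`. -/
theorem symm_poly_shift_eval (n : ℕ) (hn : 1 ≤ n) (A : (Fin n → ℤ) → ℚ)
    (h : ∀ ρ : ℕ, 1 ≤ ρ → ρ ≤ n → esymmOp n ρ (DeltaOp n) A = 0)
    (p : MvPolynomial (Fin n) ℚ) (hp : p.IsSymmetric) :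
    applyShifts p A = fun k => MvPolynomial.eval (fun _ => (1 : ℚ)) p * A k :=
  symm_poly_shift_eval_general n A h p hp
end

section
/- Let n ≥ 2. As operators on functions ℤ^n → ℚ, ∏_{i=2}^{n} (id + δ_1 Δ_i) − ∏_{i=2}^{n} (id + Δ_1 δ_i) = ∑_{s=1}^{n} ∑_{r=1}^{n−s} (−1)^s · ( Δ_1^{r+s−1} δ_1^{s−1} e_r(δ_1,...,δ_n) − δ_1^{r+s−1} Δ_1^{s−1} e_r(Δ_1,...,Δ_n) ), where e_r is the r-th elementary symmetric polynomial in n variables evaluated at the indicated commuting operators. -/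
/-! The difference operators are the images of elements of the commutative group algebra
`ℚ[ℤⁿ]` under its action on functions `ℤⁿ → ℚ` by translation, so it suffices to prove the
identity for commuting variables `a i` (for `Δ_i`) and `b i` (for `δ_i`) in a commutative ring.
Write `α = a 0` and `a'` for the other variables. Since `e_r(a) = e_r(a') + α e_{r-1}(a')`, the
coefficient of `β^t` in the double sum (with `b 0` replaced by a free `β`) telescopes to
`(-α)^t - e_t(a')`, so that `∏_{i ≠ 0} (1 + β a_i)` plus the double sum is `∑_{t<n} (-αβ)^t`.
This is symmetric in `α` and `β`; subtracting the same identity with the roles of `a` and `b`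
exchanged gives the theorem. -/

open Finset

namespace Multiset

section CommSemiring

variable {R : Type*} [CommSemiring R]

theorem esymm_zero (s : Multiset R) : s.esymm 0 = 1 := by
  simp [esymm, powersetCard_zero_left]

theorem esymm_cons_succ (a : R) (s : Multiset R) (k : ℕ) :
    (a ::ₘ s).esymm (k + 1) = s.esymm (k + 1) + a * s.esymm k := by
  simp only [esymm, powersetCard_cons, map_add, sum_add, map_map, Function.comp_def, prod_cons,
    sum_map_mul_left]

end CommSemiring

theorem sum_range_neg_pow_mul_esymm_cons {R : Type*} [CommRing R] (a : R) (s : Multiset R)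
    (k : ℕ) :
    ∑ j ∈ Finset.range k, (-a) ^ j * (a ::ₘ s).esymm (k - j) = s.esymm k - (-a) ^ k := by
  have telescope : ∀ j ∈ Finset.range k, (-a) ^ j * (a ::ₘ s).esymm (k - j) =
      (-a) ^ j * s.esymm (k - j) - (-a) ^ (j + 1) * s.esymm (k - (j + 1)) := by
    intro j hj
    rw [show k - j = k - (j + 1) + 1 by grind, esymm_cons_succ]
    ring
  rw [Finset.sum_congr rfl telescope, Finset.sum_range_sub', Nat.sub_self, esymm_zero]
  simp

end Multiset

theorem Finset.sum_Icc_one_sum_Icc_one_sub {M : Type*} [AddCommMonoid M] (m : ℕ)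
    (f : ℕ → ℕ → M) :
    ∑ p ∈ Icc 1 m, ∑ r ∈ Icc 1 (m - p), f p r =
      ∑ t ∈ range (m - 1), ∑ j ∈ range (t + 1), f (j + 1) (t + 1 - j) := by
  rw [sum_sigma', sum_sigma']
  refine sum_nbij' (fun x => ⟨x.2 + x.1 - 2, x.1 - 1⟩) (fun x => ⟨x.2 + 1, x.1 + 1 - x.2⟩)
    ?_ ?_ ?_ ?_ ?_ <;> rintro ⟨p, r⟩ h <;>
    simp only [mem_sigma, mem_Icc, mem_range, Sigma.mk.injEq, heq_eq_eq] at h ⊢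
  · omega
  · omega
  · omega
  · omega
  · congr 1 <;> omega

section ElementarySymmetric

variable {R : Type*} [CommRing R] {ι : Type*}

theorem Finset.prod_one_add_mul_eq_sum_esymm (s : Finset ι) (x : ι → R) (c : R) :
    ∏ i ∈ s, (1 + c * x i) = ∑ j ∈ range (#s + 1), c ^ j * (s.val.map x).esymm j := by
  rw [prod_one_add, sum_powerset]
  refine sum_congr rfl fun j _ => ?_
  rw [esymm_map_val, mul_sum]
  refine sum_congr rfl fun t ht => ?_
  rw [prod_mul_distrib, prod_const, (mem_powersetCard.mp ht).2]

variable [DecidableEq ι]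

theorem Finset.prod_erase_add_sum_esymm {s : Finset ι} {i₀ : ι} (h : i₀ ∈ s) (a : ι → R)
    (β : R) :
    ∏ i ∈ s.erase i₀, (1 + β * a i) +
        ∑ p ∈ Icc 1 #s, ∑ r ∈ Icc 1 (#s - p),
          (-1) ^ p * (β ^ (r + p - 1) * (a i₀ ^ (p - 1) * (s.val.map a).esymm r)) =
      ∑ t ∈ range #s, (-(a i₀ * β)) ^ t := by
  set T := s.erase i₀
  have hcard : #s = #T + 1 := (card_erase_add_one h).symm
  have hval : s.val.map a = a i₀ ::ₘ T.val.map a := by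
    rw [← insert_erase h, insert_val_of_notMem (notMem_erase i₀ s), Multiset.map_cons]
  have coeff : ∀ t ∈ range #T, ∑ j ∈ range (t + 1),
      (-1) ^ (j + 1) * (β ^ (t + 1 - j + (j + 1) - 1) * (a i₀ ^ (j + 1 - 1) *
        (s.val.map a).esymm (t + 1 - j))) =
      -(β ^ (t + 1) * (T.val.map a).esymm (t + 1)) + (-(a i₀ * β)) ^ (t + 1) := by
    intro t _
    have := Multiset.sum_range_neg_pow_mul_esymm_cons (a i₀) (T.val.map a) (t + 1)
    rw [← hval] at this
    calc _ = -(β ^ (t + 1) *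
          ∑ j ∈ range (t + 1), (-a i₀) ^ j * (s.val.map a).esymm (t + 1 - j)) := by
          rw [mul_sum, ← sum_neg_distrib]
          refine sum_congr rfl fun j _ => ?_
          rw [show t + 1 - j + (j + 1) - 1 = t + 1 by grind, Nat.add_sub_cancel]
          ring
      _ = _ := by rw [this]; ring
  rw [sum_Icc_one_sum_Icc_one_sub, hcard, Nat.add_sub_cancel, sum_congr rfl coeff,
    prod_one_add_mul_eq_sum_esymm, sum_range_succ', sum_range_succ' _ #T, sum_add_distrib,
    sum_neg_distrib, Multiset.esymm_zero]
  ring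

theorem Finset.prod_erase_sub_prod_erase {s : Finset ι} {i₀ : ι} (h : i₀ ∈ s)
    (a b : ι → R) :
    ∏ i ∈ s.erase i₀, (1 + b i₀ * a i) - ∏ i ∈ s.erase i₀, (1 + a i₀ * b i) =
      ∑ p ∈ Icc 1 #s, ∑ r ∈ Icc 1 (#s - p),
        (-1) ^ p * (a i₀ ^ (r + p - 1) * (b i₀ ^ (p - 1) * (s.val.map b).esymm r) -
          b i₀ ^ (r + p - 1) * (a i₀ ^ (p - 1) * (s.val.map a).esymm r)) := by
  have ha := prod_erase_add_sum_esymm h a (b i₀)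
  have hb := prod_erase_add_sum_esymm h b (a i₀)
  rw [mul_comm (b i₀)] at hb
  simp only [mul_sub, sum_sub_distrib]
  linear_combination ha - hb

end ElementarySymmetric

theorem Module.End.neg_one_pow_apply {R M : Type*} [Ring R] [AddCommGroup M] [Module R M]
    (p : ℕ) (x : M) : ((-1 : Module.End R M) ^ p) x = (-1 : R) ^ p • x := by
  rcases Nat.even_or_odd p with h | h <;> simp [h.neg_one_pow]

section Translation

variable (K G : Type*) [CommSemiring K] [AddMonoid G]

def translateHom : Multiplicative G →* Module.End K (G → K) where
  toFun v := LinearMap.funLeft K K (· + v.toAdd)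
  map_one' := by ext; simp
  map_mul' v w := by ext; simp [add_assoc]

noncomputable def translateAlgHom : AddMonoidAlgebra K G →ₐ[K] Module.End K (G → K) :=
  AddMonoidAlgebra.lift K _ G (translateHom K G)

variable {K G}

theorem translateAlgHom_single_apply (v : G) (c : K) (A : G → K) (k : G) :
    translateAlgHom K G (AddMonoidAlgebra.single v c) A k = c * A (k + v) := by
  simp [translateAlgHom, translateHom]

end Translation

section DifferenceOperators

variable {n : ℕ}

theorem kup_eq_add_single (k : Fin n → ℤ) (i : Fin n) (t : ℤ) :
    kup k i t = k + Pi.single i t := by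
  ext j
  by_cases h : j = i
  · subst h; simp [kup]
  · simp [kup, h]

theorem DeltaOp_eq_translateAlgHom (i : Fin n) :
    DeltaOp n i =
      translateAlgHom ℚ (Fin n → ℤ) (AddMonoidAlgebra.single (Pi.single i 1) 1 - 1) := by
  ext A k
  rw [map_sub, map_one, LinearMap.sub_apply, Module.End.one_apply, Pi.sub_apply,
    translateAlgHom_single_apply, one_mul, DeltaOp, kup_eq_add_single]

theorem deltaOp_eq_translateAlgHom (i : Fin n) :
    deltaOp n i =
      translateAlgHom ℚ (Fin n → ℤ) (1 - AddMonoidAlgebra.single (Pi.single i (-1)) 1) := by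
  ext A k
  rw [map_sub, map_one, LinearMap.sub_apply, Module.End.one_apply, Pi.sub_apply,
    translateAlgHom_single_apply, one_mul, deltaOp, kup_eq_add_single]

variable {R F : Type*} [CommSemiring R] [FunLike F R (Module.End ℚ ((Fin n → ℤ) → ℚ))]
  [RingHomClass F R (Module.End ℚ ((Fin n → ℤ) → ℚ))] (φ : F)

theorem opProd_map (g : Fin n → R) (S : Finset (Fin n)) :
    opProd n (fun i => φ (g i)) S = φ (∏ i ∈ S, g i) := by
  rw [← prod_map_toList, opProd]
  induction S.toList with
  | nil => simp [Module.End.coe_one]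
  | cons i l ih => simp [ih, Module.End.coe_mul]

theorem esymmOp_map (g : Fin n → R) (r : ℕ) :
    esymmOp n r (fun i => φ (g i)) = φ ((univ.val.map g).esymm r) := by
  ext A k
  simp only [esymmOp, esymm_map_val, opProd_map, map_sum, LinearMap.sum_apply,
    Finset.sum_apply]

end DifferenceOperators

/-- The operator identity
`∏_{i=2}^{n} (id + δ_1 Δ_i) − ∏_{i=2}^{n} (id + Δ_1 δ_i)
  = ∑_{s=1}^{n} ∑_{r=1}^{n−s} (−1)^s (Δ_1^{r+s−1} δ_1^{s−1} e_r(δ_1,…,δ_n)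
      − δ_1^{r+s−1} Δ_1^{s−1} e_r(Δ_1,…,Δ_n))`
on functions `ℤ^n → ℚ`. -/
theorem operator_identity_V (n : ℕ) (hn : 2 ≤ n) :
    ∀ A : (Fin n → ℤ) → ℚ, ∀ k : Fin n → ℤ,
      opProd n (fun i A' k' => A' k' + deltaOp n ⟨0, by omega⟩ (DeltaOp n i A') k')
          (Finset.univ.filter (fun i : Fin n => i.1 ≠ 0)) A k -
        opProd n (fun i A' k' => A' k' + DeltaOp n ⟨0, by omega⟩ (deltaOp n i A') k')
          (Finset.univ.filter (fun i : Fin n => i.1 ≠ 0)) A k =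
      ∑ s ∈ Finset.Icc 1 n, ∑ r ∈ Finset.Icc 1 (n - s),
        (-1 : ℚ) ^ s *
          ((DeltaOp n ⟨0, by omega⟩)^[r + s - 1]
              ((deltaOp n ⟨0, by omega⟩)^[s - 1] (esymmOp n r (deltaOp n) A)) k -
            (deltaOp n ⟨0, by omega⟩)^[r + s - 1]
              ((DeltaOp n ⟨0, by omega⟩)^[s - 1] (esymmOp n r (DeltaOp n) A)) k) := by
  intro A k
  set z : Fin n := ⟨0, by omega⟩
  set φ := translateAlgHom ℚ (Fin n → ℤ)
  obtain ⟨a, ha⟩ : ∃ a : Fin n → AddMonoidAlgebra ℚ (Fin n → ℤ),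
      DeltaOp n = fun i => ⇑(φ (a i)) := ⟨_, funext DeltaOp_eq_translateAlgHom⟩
  obtain ⟨b, hb⟩ : ∃ b : Fin n → AddMonoidAlgebra ℚ (Fin n → ℤ),
      deltaOp n = fun i => ⇑(φ (b i)) := ⟨_, funext deltaOp_eq_translateAlgHom⟩
  have hT : univ.filter (fun i : Fin n => i.1 ≠ 0) = univ.erase z := by
    ext i; simp [z, Fin.ext_iff]
  have hfac₁ : (fun i A' k' => A' k' + φ (b z) (φ (a i) A') k') =
      fun i => ⇑(φ (1 + b z * a i)) := by ext; simp
  have hfac₂ : (fun i A' k' => A' k' + φ (a z) (φ (b i) A') k') =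
      fun i => ⇑(φ (1 + a z * b i)) := by ext; simp
  have hring := congrArg (fun p => φ p A k) (prod_erase_sub_prod_erase (mem_univ z) a b)
  simp only [card_univ, Fintype.card_fin, map_sub, map_sum, map_mul, map_pow, map_neg, map_one,
    LinearMap.sub_apply, LinearMap.sum_apply, Finset.sum_apply, Pi.sub_apply,
    Module.End.mul_apply, Module.End.neg_one_pow_apply] at hring
  rw [ha, hb, hT, hfac₁, hfac₂, opProd_map, opProd_map, hring]
  simp only [esymmOp_map, ← Module.End.coe_pow, Pi.smul_apply, smul_eq_mul, mul_sub]
end
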